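/- arXiv:1601.02195 — 3 statements merged into one kernel-verified Lean document; each statement's English description precedes it below -/
import Mathlib

section
/- Let ν be a finite Borel measure on ℝⁿ and let β : ℝⁿ × ℝⁿ → ℝ be a measurable function, linear in its first argument, with x ↦ β(k,x) integrable with respect to ν for every k ∈ ℝⁿ, such that for every k ∈ ℝⁿ and every smooth compactly supported function φ : ℝⁿ → ℝ one has ∫ ⟨∇φ(x), k⟩ ν(dx) = -∫ φ(x) β(k,x) ν(dx). Let h : ℝⁿ → ℝⁿ be a smooth vector field such that h and its derivative are bounded and x ↦ β(h(x),x) is ν-integrable. Then for every smooth compactly supported φ : ℝⁿ → ℝ, ∫ ⟨∇φ(x), h(x)⟩ ν(dx) = -∫ φ(x) [ β(h(x),x) + tr(Dh(x)) ] ν(dx). In other words, the logarithmic derivative of ν along the vector field h equals β_h^ν(x) = β(h(x),x) + tr h′(x). -/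
open MeasureTheory

private lemma euclid_trace_eq {n : ℕ}
    (f : EuclideanSpace ℝ (Fin n) →L[ℝ] EuclideanSpace ℝ (Fin n)) :
    LinearMap.trace ℝ (EuclideanSpace ℝ (Fin n)) f.toLinearMap
      = ∑ i, f (EuclideanSpace.single i 1) i := by
  classical
  rw [LinearMap.trace_eq_matrix_trace ℝ ((EuclideanSpace.basisFun (Fin n) ℝ).toBasis)]
  simp [Matrix.trace, LinearMap.toMatrix_apply, Matrix.diag,
    OrthonormalBasis.coe_toBasis_repr_apply, EuclideanSpace.basisFun_repr,
    EuclideanSpace.basisFun_apply]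

private lemma euclid_proj_apply {n : ℕ} (i : Fin n) (x : EuclideanSpace ℝ (Fin n)) :
    EuclideanSpace.proj i x = x i := rfl

private lemma euclid_sum_single {n : ℕ} (x : EuclideanSpace ℝ (Fin n)) :
    ∑ i, x i • EuclideanSpace.single i (1:ℝ) = x := by
  classical
  have := (EuclideanSpace.basisFun (Fin n) ℝ).toBasis.sum_repr x
  simpa [OrthonormalBasis.coe_toBasis_repr_apply, EuclideanSpace.basisFun_repr,
    EuclideanSpace.basisFun_apply, OrthonormalBasis.coe_toBasis] using this

/-- Theorem 1 of the paper (finite-dimensional case): if `β(k,·)` is the logarithmic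
derivative of the finite Borel measure `ν` along each constant direction `k`, and `h` is a
smooth bounded vector field with bounded derivative, then the logarithmic derivative of `ν`
along the vector field `h` is `x ↦ β(h(x),x) + tr(Dh(x))`. -/
theorem logDeriv_along_vector_field
    {n : ℕ} (ν : Measure (EuclideanSpace ℝ (Fin n))) [IsFiniteMeasure ν]
    (β : EuclideanSpace ℝ (Fin n) → EuclideanSpace ℝ (Fin n) → ℝ)
    (hβmeas : Measurable fun p : EuclideanSpace ℝ (Fin n) × EuclideanSpace ℝ (Fin n) =>
      β p.1 p.2)
    (hβlin : ∀ x, IsLinearMap ℝ fun k => β k x)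
    (hβint : ∀ k, Integrable (fun x => β k x) ν)
    (hIBP : ∀ k, ∀ φ : EuclideanSpace ℝ (Fin n) → ℝ, ContDiff ℝ (⊤ : ℕ∞) φ → HasCompactSupport φ →
      ∫ x, fderiv ℝ φ x k ∂ν = -∫ x, φ x * β k x ∂ν)
    (h : EuclideanSpace ℝ (Fin n) → EuclideanSpace ℝ (Fin n))
    (hh : ContDiff ℝ (⊤ : ℕ∞) h)
    (hhbdd : ∃ C, ∀ x, ‖h x‖ ≤ C)
    (hDhbdd : ∃ C, ∀ x, ‖fderiv ℝ h x‖ ≤ C)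
    (hint : Integrable (fun x => β (h x) x) ν) :
    ∀ φ : EuclideanSpace ℝ (Fin n) → ℝ, ContDiff ℝ (⊤ : ℕ∞) φ → HasCompactSupport φ →
      ∫ x, fderiv ℝ φ x (h x) ∂ν =
        -∫ x, φ x * (β (h x) x +
          LinearMap.trace ℝ (EuclideanSpace ℝ (Fin n)) (fderiv ℝ h x).toLinearMap) ∂ν := by
  intro φ hφ hφc
  classical
  set e : Fin n → EuclideanSpace ℝ (Fin n) := fun i => EuclideanSpace.single i (1:ℝ) with he
  set ψ : Fin n → EuclideanSpace ℝ (Fin n) → ℝ :=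
    fun i x => φ x * EuclideanSpace.proj i (h x) with hψdef
  set T : EuclideanSpace ℝ (Fin n) → ℝ :=
    fun x => ∑ i, EuclideanSpace.proj i (fderiv ℝ h x (e i)) with hTdef
  have hhd : Differentiable ℝ h := hh.differentiable (by simp)
  have hφd : Differentiable ℝ φ := hφ.differentiable (by simp)
  have hψsm : ∀ i, ContDiff ℝ (⊤ : ℕ∞) (ψ i) := fun i =>
    hφ.mul (by exact (EuclideanSpace.proj i).contDiff.comp hh)
  have hψc : ∀ i, HasCompactSupport (ψ i) := fun i => hφc.mul_right
  -- value of the derivative of `ψ i` in the direction `e i`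
  have hψderiv : ∀ i x, fderiv ℝ (ψ i) x (e i)
      = EuclideanSpace.proj i (h x) * fderiv ℝ φ x (e i)
        + φ x * EuclideanSpace.proj i (fderiv ℝ h x (e i)) := by
    intro i x
    have hg : HasFDerivAt (fun y => EuclideanSpace.proj i (h y))
        ((EuclideanSpace.proj i).comp (fderiv ℝ h x)) x := by
      exact (EuclideanSpace.proj i).hasFDerivAt.comp x (hhd x).hasFDerivAt
    have hm : HasFDerivAt (ψ i)
        (φ x • ((EuclideanSpace.proj i).comp (fderiv ℝ h x))
          + EuclideanSpace.proj i (h x) • fderiv ℝ φ x) x :=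
      (hφd x).hasFDerivAt.mul hg
    rw [hm.fderiv]
    simp only [ContinuousLinearMap.add_apply, ContinuousLinearMap.smul_apply,
      ContinuousLinearMap.comp_apply, smul_eq_mul]
    ring
  -- linearity of β in the first variable
  have hβsum : ∀ x, φ x * β (h x) x = ∑ i, ψ i x * β (e i) x := by
    intro x
    have : β (h x) x = ∑ i, EuclideanSpace.proj i (h x) * β (e i) x := by
      conv_lhs => rw [← euclid_sum_single (h x)]
      have hms := map_sum (IsLinearMap.mk' _ (hβlin x))
        (fun i => h x i • e i) Finset.univ
      simp only [_root_.map_smul, IsLinearMap.mk'_apply, smul_eq_mul, he] at hms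
      simpa only [he, euclid_proj_apply] using hms
    rw [this, Finset.mul_sum]
    exact Finset.sum_congr rfl fun i _ => by rw [hψdef]; ring
  -- trace as a sum of diagonal entries
  have htr : ∀ x, LinearMap.trace ℝ (EuclideanSpace ℝ (Fin n)) (fderiv ℝ h x).toLinearMap
      = T x := by
    intro x
    rw [euclid_trace_eq]
    rfl
  -- expanding the derivative of φ along h x
  have hfd : ∀ x, fderiv ℝ φ x (h x)
      = ∑ i, EuclideanSpace.proj i (h x) * fderiv ℝ φ x (e i) := by
    intro x
    conv_lhs => rw [← euclid_sum_single (h x)]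
    rw [map_sum]
    simp only [_root_.map_smul, smul_eq_mul, he, euclid_proj_apply]
  -- integrability facts
  have hφbdd : ∃ C, ∀ x, ‖φ x‖ ≤ C := hφc.exists_bound_of_continuous hφ.continuous
  have hψbdd : ∀ i, ∃ C, ∀ x, ‖ψ i x‖ ≤ C := fun i =>
    (hψc i).exists_bound_of_continuous (hψsm i).continuous
  have hint1 : ∀ i, Integrable (fun x => ψ i x * β (e i) x) ν := fun i => by
    obtain ⟨C, hC⟩ := hψbdd i
    exact (hβint (e i)).bdd_mul (hψsm i).continuous.aestronglyMeasurable (.of_forall hC)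
  have hintD : ∀ i, Integrable (fun x => fderiv ℝ (ψ i) x (e i)) ν := fun i =>
    Continuous.integrable_of_hasCompactSupport
      (((hψsm i).continuous_fderiv (by simp)).clm_apply continuous_const)
      ((hψc i).fderiv_apply ℝ (e i))
  have hTcont : Continuous T := by
    apply continuous_finset_sum
    intro i _
    exact (EuclideanSpace.proj i).continuous.comp
      ((hh.continuous_fderiv (by simp)).clm_apply continuous_const)
  have hintT : Integrable (fun x => φ x * T x) ν :=
    Continuous.integrable_of_hasCompactSupport (hφ.continuous.mul hTcont) hφc.mul_right
  have hintφβ : Integrable (fun x => φ x * β (h x) x) ν :=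
    by
    obtain ⟨C, hC⟩ := hφbdd
    exact hint.bdd_mul hφ.continuous.aestronglyMeasurable (.of_forall hC)
  have hintA : Integrable (fun x => fderiv ℝ φ x (h x)) ν := by
    apply Continuous.integrable_of_hasCompactSupport
      ((hφ.continuous_fderiv (by simp)).clm_apply hh.continuous)
    apply (hφc.fderiv ℝ).mono
    intro x hx
    simp only [Function.mem_support] at hx ⊢
    intro h0
    exact hx (by rw [h0]; rfl)
  -- integration by parts for each coordinate
  have hIBPi : ∀ i, ∫ x, fderiv ℝ (ψ i) x (e i) ∂ν = -∫ x, ψ i x * β (e i) x ∂ν :=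
    fun i => hIBP (e i) (ψ i) (hψsm i) (hψc i)
  -- pointwise identity for the sum of derivatives
  have key : ∀ x, ∑ i, fderiv ℝ (ψ i) x (e i)
      = fderiv ℝ φ x (h x) + φ x * T x := by
    intro x
    rw [hfd x, hTdef, Finset.mul_sum, ← Finset.sum_add_distrib]
    exact Finset.sum_congr rfl fun i _ => hψderiv i x
  -- the summed identity
  have hsum : ∫ x, (fderiv ℝ φ x (h x) + φ x * T x) ∂ν = -∫ x, φ x * β (h x) x ∂ν := by
    calc ∫ x, (fderiv ℝ φ x (h x) + φ x * T x) ∂ν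
        = ∫ x, ∑ i, fderiv ℝ (ψ i) x (e i) ∂ν :=
          integral_congr_ae (.of_forall fun x => (key x).symm)
      _ = ∑ i, ∫ x, fderiv ℝ (ψ i) x (e i) ∂ν :=
          integral_finset_sum _ fun i _ => hintD i
      _ = ∑ i, -∫ x, ψ i x * β (e i) x ∂ν :=
          Finset.sum_congr rfl fun i _ => hIBPi i
      _ = -∑ i, ∫ x, ψ i x * β (e i) x ∂ν := by rw [Finset.sum_neg_distrib]
      _ = -∫ x, ∑ i, ψ i x * β (e i) x ∂ν := by
          rw [integral_finset_sum _ fun i _ => hint1 i]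
      _ = -∫ x, φ x * β (h x) x ∂ν := by
          congr 1
          exact integral_congr_ae (.of_forall fun x => (hβsum x).symm)
  have hsplit : ∫ x, (fderiv ℝ φ x (h x) + φ x * T x) ∂ν
      = (∫ x, fderiv ℝ φ x (h x) ∂ν) + ∫ x, φ x * T x ∂ν :=
    integral_add hintA hintT
  have hrhs : ∫ x, φ x * (β (h x) x +
        LinearMap.trace ℝ (EuclideanSpace ℝ (Fin n)) (fderiv ℝ h x).toLinearMap) ∂ν
      = (∫ x, φ x * β (h x) x ∂ν) + ∫ x, φ x * T x ∂ν := by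
    rw [← integral_add hintφβ hintT]
    refine integral_congr_ae (.of_forall fun x => ?_)
    simp only
    rw [htr x]
    ring
  rw [hrhs]
  linarith [hsum, hsplit]
end

section
/- Let ν be a finite Borel measure on ℝⁿ, let ε > 0, and let S : (-ε,ε) → (ℝⁿ → ℝⁿ) be a family of Borel-measurable self-maps of ℝⁿ with S(0) = id. Assume there is a constant C such that ‖S(t)(x) - x‖ ≤ C|t| for all x ∈ ℝⁿ and t ∈ (-ε,ε), and that for ν-almost every x the map t ↦ S(t)(x) is differentiable at t = 0 with derivative h_S(x) := (d/dt)|_{t=0} S(t)(x). Then for every continuously differentiable function φ : ℝⁿ → ℝ which is bounded and has bounded derivative, the function t ↦ ∫ φ(S(t)(x)) ν(dx) (which equals t ↦ ∫ φ d((S(t))_*ν) by the change of variables formula) is differentiable at t = 0 and (d/dt)|_{t=0} ∫ φ(S(t)(x)) ν(dx) = ∫ Dφ(x)(h_S(x)) ν(dx). -/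
/-!
Differentiate under the integral sign: for each `x` the slope `(φ (S t x) - φ x) / t` tends to
`Dφ(x)(h_S(x))` by the chain rule, and it is bounded by `sup ‖Dφ‖ * C` uniformly in `x` and `t`
because `φ` is Lipschitz and `‖S t x - x‖ ≤ C|t|`. Dominated convergence on the finite measure `ν`
then passes the limit through the integral.
-/

open MeasureTheory Filter Topology

section ParametricIntegral

variable {α : Type*} [MeasurableSpace α] {μ : Measure α} {𝕜 : Type*} [RCLike 𝕜]
  {E : Type*} [NormedAddCommGroup E] [NormedSpace ℝ E] [NormedSpace 𝕜 E]

theorem integral_slope {F : 𝕜 → α → E} {x₀ x : 𝕜} (hx₀ : Integrable (F x₀) μ)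
    (hx : Integrable (F x) μ) :
    ∫ a, slope (F · a) x₀ x ∂μ = slope (fun y ↦ ∫ a, F y a ∂μ) x₀ x := by
  simp only [slope_def_module, integral_smul, integral_sub hx hx₀]

-- Unlike `hasDerivAt_integral_of_dominated_loc_of_lip`, this needs no measurability of `F'`:
-- dominated convergence obtains it as the a.e. limit of the slopes.
theorem hasDerivAt_integral_of_dominated_slope {F : 𝕜 → α → E} {F' : α → E} {x₀ : 𝕜}
    {s : Set 𝕜} {bound : α → ℝ} (hs : s ∈ 𝓝 x₀) (hF_int : ∀ x ∈ s, Integrable (F x) μ)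
    (h_slope : ∀ᵐ a ∂μ, ∀ x ∈ s, ‖F x a - F x₀ a‖ ≤ bound a * ‖x - x₀‖)
    (bound_integrable : Integrable bound μ) (h_diff : ∀ᵐ a ∂μ, HasDerivAt (F · a) (F' a) x₀) :
    HasDerivAt (fun x ↦ ∫ a, F x a ∂μ) (∫ a, F' a ∂μ) x₀ := by
  have hs' : s ∈ 𝓝[≠] x₀ := nhdsWithin_le_nhds hs
  have hx₀ : Integrable (F x₀) μ := hF_int x₀ (mem_of_mem_nhds hs)
  have slope_le : ∀ᶠ x in 𝓝[≠] x₀, ∀ᵐ a ∂μ, ‖slope (F · a) x₀ x‖ ≤ bound a := by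
    filter_upwards [hs', self_mem_nhdsWithin] with x hx hne
    filter_upwards [h_slope] with a ha
    have hpos : 0 < ‖x - x₀‖ := norm_pos_iff.2 (sub_ne_zero.2 hne)
    rw [slope_def_module, norm_smul, norm_inv, inv_mul_le_iff₀ hpos, mul_comm]
    exact ha x hx
  have tendsto_integral_slope : Tendsto (fun x ↦ ∫ a, slope (F · a) x₀ x ∂μ) (𝓝[≠] x₀)
      (𝓝 (∫ a, F' a ∂μ)) := by
    refine tendsto_integral_filter_of_dominated_convergence bound ?_ slope_le bound_integrable
      (h_diff.mono fun a ha ↦ hasDerivAt_iff_tendsto_slope.1 ha)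
    filter_upwards [hs'] with x hx
    exact (((hF_int x hx).sub hx₀).smul (x - x₀)⁻¹).aestronglyMeasurable
  rw [hasDerivAt_iff_tendsto_slope]
  refine tendsto_integral_slope.congr' ?_
  filter_upwards [hs'] with x hx
  exact integral_slope hx₀ (hF_int x hx)

end ParametricIntegral

/-- Proposition 1 of the paper (finite-dimensional case): if `S` is a family of Borel
self-maps of `ℝⁿ` with `S 0 = id`, `‖S t x - x‖ ≤ C|t|`, and `t ↦ S t x` differentiable at
`0` with derivative `hS x` for `ν`-a.e. `x`, then for every bounded `C¹` test function `φ`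
with bounded derivative, `t ↦ ∫ φ(S t x) dν = ∫ φ d((S t)_*ν)` is differentiable at `0`
with derivative `∫ Dφ(x)(hS x) dν`. -/
theorem deriv_along_family_eq_deriv_along_generator
    {n : ℕ} (ν : Measure (EuclideanSpace ℝ (Fin n))) [IsFiniteMeasure ν]
    (ε : ℝ) (hε : 0 < ε)
    (S : ℝ → EuclideanSpace ℝ (Fin n) → EuclideanSpace ℝ (Fin n))
    (hSmeas : ∀ t ∈ Set.Ioo (-ε) ε, Measurable (S t))
    (hS0 : S 0 = id)
    (hLip : ∃ C : ℝ, ∀ x, ∀ t ∈ Set.Ioo (-ε) ε, ‖S t x - x‖ ≤ C * |t|)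
    (hS : EuclideanSpace ℝ (Fin n) → EuclideanSpace ℝ (Fin n))
    (hSdiff : ∀ᵐ x ∂ν, HasDerivAt (fun t => S t x) (hS x) 0) :
    ∀ φ : EuclideanSpace ℝ (Fin n) → ℝ, ContDiff ℝ 1 φ →
      (∃ C, ∀ x, ‖φ x‖ ≤ C) → (∃ C, ∀ x, ‖fderiv ℝ φ x‖ ≤ C) →
      HasDerivAt (fun t => ∫ x, φ (S t x) ∂ν) (∫ x, fderiv ℝ φ x (hS x) ∂ν) 0 := by
  obtain ⟨C, hC⟩ := hLip
  rintro φ hφ ⟨Cφ, hCφ⟩ ⟨C', hC'⟩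
  have hφd : Differentiable ℝ φ := hφ.differentiable one_ne_zero
  have hC'0 : 0 ≤ C' := (norm_nonneg _).trans (hC' 0)
  have hφ_lip : ∀ a b, ‖φ a - φ b‖ ≤ C' * ‖a - b‖ := fun a b ↦
    convex_univ.norm_image_sub_le_of_norm_fderiv_le (fun x _ ↦ hφd x) (fun x _ ↦ hC' x)
      (Set.mem_univ b) (Set.mem_univ a)
  refine hasDerivAt_integral_of_dominated_slope (s := Set.Ioo (-ε) ε) (bound := fun _ ↦ C' * C)
    (Ioo_mem_nhds (by linarith) hε) (fun t ht ↦ ?_) (ae_of_all _ fun x t ht ↦ ?_)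
    (integrable_const _) ?_
  · exact .of_bound (hφ.continuous.measurable.comp (hSmeas t ht)).aestronglyMeasurable Cφ
      (ae_of_all _ fun x ↦ hCφ _)
  · simp only [hS0, id, sub_zero, Real.norm_eq_abs]
    calc |φ (S t x) - φ x| ≤ C' * ‖S t x - x‖ := hφ_lip _ _
      _ ≤ C' * (C * |t|) := mul_le_mul_of_nonneg_left (hC x t ht) hC'0
      _ = C' * C * |t| := by ring
  · filter_upwards [hSdiff] with x hx
    simpa [hS0, Function.comp_def] using (hφd (S 0 x)).hasFDerivAt.comp_hasDerivAt 0 hx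
end

section
/- Let ν be a finite Borel measure on ℝⁿ, ε > 0, and let S, S₁ : (-ε,ε) → (ℝⁿ → ℝⁿ) be two families of Borel-measurable self-maps of ℝⁿ with S(0) = S₁(0) = id, each satisfying: there is a constant C with ‖S(t)(x) - x‖ ≤ C|t| and ‖S₁(t)(x) - x‖ ≤ C|t| for all x and t, and for ν-almost every x the maps t ↦ S(t)(x) and t ↦ S₁(t)(x) are differentiable at t = 0. If the infinitesimal generators coincide, i.e. (d/dt)|_{t=0} S(t)(x) = (d/dt)|_{t=0} S₁(t)(x) for ν-almost every x, then for every bounded continuously differentiable φ : ℝⁿ → ℝ with bounded derivative, the functions t ↦ ∫ φ(S(t)(x)) ν(dx) and t ↦ ∫ φ(S₁(t)(x)) ν(dx) are both differentiable at t = 0 and have the same derivative there. -/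
/-! Both derivatives are computed by differentiating under the integral sign. The mean value
bound `‖φ (S t x) - φ x‖ ≤ ‖Dφ‖_∞ C |t|` dominates the difference quotients by a constant,
which is integrable since `ν` is finite, and the chain rule gives the pointwise derivative
`Dφ(x) (h_S x)` for `ν`-a.e. `x`. Hence the derivative at `0` is `∫ Dφ(x) (h_S x) dν`, which
depends on `S` only through its generator `h_S`. -/

open MeasureTheory Filter Topology Set

section ParametricDeriv

variable {α : Type*} [MeasurableSpace α] {μ : Measure α}

theorem aestronglyMeasurable_of_hasDerivAt_ae {𝕜 : Type*} [NontriviallyNormedField 𝕜]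
    {E : Type*} [NormedAddCommGroup E] [NormedSpace 𝕜 E] {F : 𝕜 → α → E} {F' : α → E} {t₀ : 𝕜}
    {s : Set 𝕜} (hs : s ∈ 𝓝 t₀)
    (hF_meas : ∀ t ∈ s, AEStronglyMeasurable (F t) μ)
    (h_diff : ∀ᵐ a ∂μ, HasDerivAt (F · a) (F' a) t₀) :
    AEStronglyMeasurable F' μ := by
  have : (comap ((↑) : s → 𝕜) (𝓝[≠] t₀)).NeBot := comap_neBot_iff.2 fun u hu ↦ by
    obtain ⟨t, ht, hts⟩ := Filter.nonempty_of_mem (inter_mem hu (mem_nhdsWithin_of_mem_nhds hs))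
    exact ⟨⟨t, hts⟩, ht⟩
  refine aestronglyMeasurable_of_tendsto_ae (comap ((↑) : s → 𝕜) (𝓝[≠] t₀))
    (f := fun t a ↦ slope (F · a) t₀ t) (fun t ↦ ?_) ?_
  · simp only [slope_def_module]
    exact ((hF_meas t t.2).sub (hF_meas t₀ (mem_of_mem_nhds hs))).const_smul _
  · filter_upwards [h_diff] with a ha
    exact (hasDerivAt_iff_tendsto_slope.1 ha).comp tendsto_comap

/-- Unlike `hasDerivAt_integral_of_dominated_loc_of_lip`, only a Lipschitz bound at `t₀` is
needed, and the measurability of `F'` is automatic. -/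
theorem hasDerivAt_integral_of_dominated_loc_of_lip' {𝕜 : Type*} [RCLike 𝕜] {E : Type*}
    [NormedAddCommGroup E] [NormedSpace ℝ E] [NormedSpace 𝕜 E] [CompleteSpace E]
    {F : 𝕜 → α → E} {F' : α → E} {t₀ : 𝕜} {s : Set 𝕜} {bound : α → ℝ} (hs : s ∈ 𝓝 t₀)
    (hF_meas : ∀ t ∈ s, AEStronglyMeasurable (F t) μ) (hF_int : Integrable (F t₀) μ)
    (h_lipsch : ∀ᵐ a ∂μ, ∀ t ∈ s, ‖F t a - F t₀ a‖ ≤ bound a * ‖t - t₀‖)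
    (bound_integrable : Integrable bound μ)
    (h_diff : ∀ᵐ a ∂μ, HasDerivAt (F · a) (F' a) t₀) :
    HasDerivAt (fun t ↦ ∫ a, F t a ∂μ) (∫ a, F' a ∂μ) t₀ := by
  have hF'_meas := aestronglyMeasurable_of_hasDerivAt_ae hs hF_meas h_diff
  set L : E →L[𝕜] 𝕜 →L[𝕜] E := ContinuousLinearMap.smulRightL 𝕜 𝕜 E 1
  obtain ⟨hLF'_int, key⟩ := hasFDerivAt_integral_of_dominated_loc_of_lip' hs hF_meas hF_int
    (L.continuous.comp_aestronglyMeasurable hF'_meas) h_lipsch bound_integrable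
    (h_diff.mono fun a ha ↦ ha.hasFDerivAt)
  have hF'_int : Integrable F' μ :=
    (integrable_norm_iff hF'_meas).1 (by simpa [L] using hLF'_int.norm)
  rw [hasDerivAt_iff_hasFDerivAt]
  rwa [ContinuousLinearMap.integral_comp_comm _ hF'_int] at key

end ParametricDeriv

section Generator

variable {X : Type*} [NormedAddCommGroup X] [NormedSpace ℝ X] [MeasurableSpace X]
  [OpensMeasurableSpace X] {G : Type*} [NormedAddCommGroup G] [NormedSpace ℝ G] [CompleteSpace G]
  [SecondCountableTopologyEither X G] {ν : Measure X} [IsFiniteMeasure ν]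

theorem hasDerivAt_integral_comp_of_lip_at_zero {φ : X → G} (hφ : Differentiable ℝ φ)
    {Cφ : ℝ} (hφ_bdd : ∀ x, ‖φ x‖ ≤ Cφ) {C' : ℝ} (hφ' : ∀ x, ‖fderiv ℝ φ x‖ ≤ C')
    {S : ℝ → X → X} {s : Set ℝ} (hs : s ∈ 𝓝 0) (hS_meas : ∀ t ∈ s, Measurable (S t))
    (hS0 : S 0 = id) {C : ℝ} (hS_lip : ∀ x, ∀ t ∈ s, ‖S t x - x‖ ≤ C * |t|)
    (hS_diff : ∀ᵐ x ∂ν, DifferentiableAt ℝ (S · x) 0) :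
    HasDerivAt (fun t ↦ ∫ x, φ (S t x) ∂ν) (∫ x, fderiv ℝ φ x (deriv (S · x) 0) ∂ν) 0 := by
  have hφS_meas : ∀ t ∈ s, AEStronglyMeasurable (fun x ↦ φ (S t x)) ν := fun t ht ↦
    (hφ.continuous.stronglyMeasurable.comp_measurable (hS_meas t ht)).aestronglyMeasurable
  have hφ_int : Integrable (fun x ↦ φ (S 0 x)) ν :=
    .of_bound (hφS_meas 0 (mem_of_mem_nhds hs)) Cφ (ae_of_all _ fun x ↦ hφ_bdd _)
  have hφS_lip : ∀ x, ∀ t ∈ s, ‖φ (S t x) - φ (S 0 x)‖ ≤ C' * C * ‖t - 0‖ := fun x t ht ↦ calc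
    ‖φ (S t x) - φ (S 0 x)‖ ≤ C' * ‖S t x - x‖ := by
      rw [hS0]
      exact convex_univ.norm_image_sub_le_of_norm_fderiv_le (fun y _ ↦ hφ y)
        (fun y _ ↦ hφ' y) trivial trivial
    _ ≤ C' * (C * |t|) := by
      gcongr
      · exact (norm_nonneg _).trans (hφ' x)
      · exact hS_lip x t ht
    _ = C' * C * ‖t - 0‖ := by rw [sub_zero, Real.norm_eq_abs, mul_assoc]
  have hφS_diff : ∀ᵐ x ∂ν, HasDerivAt (φ ∘ (S · x)) (fderiv ℝ φ x (deriv (S · x) 0)) 0 := by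
    filter_upwards [hS_diff] with x hx
    exact (hφ x).hasFDerivAt.comp_hasDerivAt_of_eq 0 hx.hasDerivAt (by rw [hS0, id])
  exact hasDerivAt_integral_of_dominated_loc_of_lip' hs hφS_meas hφ_int
    (ae_of_all _ hφS_lip) (integrable_const _) hφS_diff

end Generator

/-- Corollary 1 of the paper (finite-dimensional case): two families `S`, `S₁` of Borel
self-maps with `S 0 = S₁ 0 = id`, uniformly Lipschitz in `t` and differentiable at `t = 0`
for `ν`-a.e. `x`, whose infinitesimal generators coincide `ν`-a.e., give rise to functions
`t ↦ ∫ φ(S t x) dν` and `t ↦ ∫ φ(S₁ t x) dν` that are both differentiable at `0` with the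
same derivative. -/
theorem deriv_along_family_depends_only_on_generator
    {n : ℕ} (ν : Measure (EuclideanSpace ℝ (Fin n))) [IsFiniteMeasure ν]
    (ε : ℝ) (hε : 0 < ε)
    (S S₁ : ℝ → EuclideanSpace ℝ (Fin n) → EuclideanSpace ℝ (Fin n))
    (hSmeas : ∀ t ∈ Set.Ioo (-ε) ε, Measurable (S t))
    (hS₁meas : ∀ t ∈ Set.Ioo (-ε) ε, Measurable (S₁ t))
    (hS0 : S 0 = id) (hS₁0 : S₁ 0 = id)
    (hLip : ∃ C : ℝ, ∀ x, ∀ t ∈ Set.Ioo (-ε) ε, ‖S t x - x‖ ≤ C * |t| ∧ ‖S₁ t x - x‖ ≤ C * |t|)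
    (hSdiff : ∀ᵐ x ∂ν, (∃ v, HasDerivAt (fun t => S t x) v 0) ∧
      (∃ v, HasDerivAt (fun t => S₁ t x) v 0))
    (hgen : ∀ᵐ x ∂ν, deriv (fun t => S t x) 0 = deriv (fun t => S₁ t x) 0) :
    ∀ φ : EuclideanSpace ℝ (Fin n) → ℝ, ContDiff ℝ 1 φ →
      (∃ C, ∀ x, ‖φ x‖ ≤ C) → (∃ C, ∀ x, ‖fderiv ℝ φ x‖ ≤ C) →
      ∃ D : ℝ, HasDerivAt (fun t => ∫ x, φ (S t x) ∂ν) D 0 ∧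
        HasDerivAt (fun t => ∫ x, φ (S₁ t x) ∂ν) D 0 := by
  intro φ hφ ⟨Cφ, hφ_bdd⟩ ⟨C', hφ'⟩
  obtain ⟨C, hS_lip⟩ := hLip
  have hs : Set.Ioo (-ε) ε ∈ 𝓝 (0 : ℝ) := Ioo_mem_nhds (neg_neg_iff_pos.2 hε) hε
  have hD := hasDerivAt_integral_comp_of_lip_at_zero (hφ.differentiable one_ne_zero) hφ_bdd hφ'
    hs hSmeas hS0 (fun x t ht ↦ (hS_lip x t ht).1)
    (hSdiff.mono fun x ⟨⟨_, hv⟩, _⟩ ↦ hv.differentiableAt)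
  have hD₁ := hasDerivAt_integral_comp_of_lip_at_zero (hφ.differentiable one_ne_zero) hφ_bdd hφ'
    hs hS₁meas hS₁0 (fun x t ht ↦ (hS_lip x t ht).2)
    (hSdiff.mono fun x ⟨_, ⟨_, hv⟩⟩ ↦ hv.differentiableAt)
  refine ⟨_, hD, ?_⟩
  rwa [integral_congr_ae (hgen.mono fun x hx ↦ by rw [hx])]
end
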